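/- arXiv:0910.3012 — 4 statements merged into one kernel-verified Lean document; each statement's English description precedes it below -/
import Mathlib

section
/- For a positive integer n, if ⌈2√n⌉² - 4n is a perfect square, then there exist positive integers u and v with n = u·v and |√u - √v| ≤ 1. -/
/-! If `m = ⌈2√n⌉` and `m² - 4n = t²`, then `x² - m x + n` has the integer roots `(m ± t)/2`,
giving a factorisation `n = u v` with `u + v = m`. These factors are positive, and
`(√u - √v)² = u + v - 2√(u v) = m - 2√n < 1`. -/

theorem Int.exists_mul_eq_add_eq_of_sq_sub_four_mul_eq_sq {m n t : ℤ}
    (h : m ^ 2 - 4 * n = t ^ 2) : ∃ a b : ℤ, a * b = n ∧ a + b = m := by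
  have hmt : Even (m - t) := by
    have : Even (m ^ 2 - t ^ 2) := ⟨2 * n, by linarith⟩
    simpa [Int.even_sub, Int.even_pow] using this
  obtain ⟨a, ha⟩ := hmt
  refine ⟨a, a + t, mul_left_cancel₀ (four_ne_zero' ℤ) ?_, by linarith⟩
  obtain rfl : m = a + a + t := by linarith
  linear_combination h

theorem Real.sqrt_sub_sqrt_sq {x y : ℝ} (hx : 0 ≤ x) (hy : 0 ≤ y) :
    (√x - √y) ^ 2 = x + y - 2 * √(x * y) := by
  rw [sub_sq, Real.sq_sqrt hx, Real.sq_sqrt hy, Real.sqrt_mul hx]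
  ring

theorem stmt_1 (n : ℕ) (hn : 0 < n)
    (h : ∃ t : ℤ, ⌈2 * Real.sqrt n⌉ ^ 2 - 4 * (n : ℤ) = t ^ 2) :
    ∃ u v : ℕ, 0 < u ∧ 0 < v ∧ n = u * v ∧
      |Real.sqrt u - Real.sqrt v| ≤ 1 := by
  obtain ⟨t, ht⟩ := h
  obtain ⟨a, b, hab, hsum⟩ := Int.exists_mul_eq_add_eq_of_sq_sub_four_mul_eq_sq ht
  have hm : 0 < ⌈2 * √(n : ℝ)⌉ := Int.ceil_pos.mpr (by positivity)
  obtain ⟨ha, hb⟩ : 0 < a ∧ 0 < b :=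
    (pos_and_pos_or_neg_and_neg_of_mul_pos (by omega)).resolve_right (by omega)
  lift a to ℕ using ha.le
  lift b to ℕ using hb.le
  have hab' : a * b = n := by exact_mod_cast hab
  have hsum' : (a + b : ℝ) = ⌈2 * √(n : ℝ)⌉ := by exact_mod_cast hsum
  refine ⟨a, b, by omega, by omega, hab'.symm, ?_⟩
  rw [← sq_le_one_iff_abs_le_one, Real.sqrt_sub_sqrt_sq (by positivity) (by positivity),
    ← Nat.cast_mul, hab', hsum']
  linarith [Int.ceil_lt_add_one (2 * √(n : ℝ))]
end

section
/- For a positive integer n, if there exist positive integers u and v with n = u·v and |√u - √v| ≤ 1, then ⌈2√n⌉² - 4n is a perfect square. -/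
/-! Since `(√u - √v)² = u + v - 2√n ∈ [0, 1]`, the ceiling of `2√n` is
`u + v`, giving `(u + v)² - 4uv = (u - v)²`, unless `2√n = u + v - 1` is an integer, in which case
`⌈2√n⌉² - 4n = 0`. -/

namespace Real

variable {x y : ℝ}

lemma sqrt_sub_sqrt_sq_s2 (hx : 0 ≤ x) (hy : 0 ≤ y) :
    (√x - √y) ^ 2 = x + y - 2 * √(x * y) := by
  rw [sub_sq, sq_sqrt hx, sq_sqrt hy, sqrt_mul hx]
  ring

lemma two_sqrt_mul_le_add (hx : 0 ≤ x) (hy : 0 ≤ y) : 2 * √(x * y) ≤ x + y := by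
  nlinarith [sqrt_sub_sqrt_sq_s2 hx hy, sq_nonneg (√x - √y)]

lemma add_sub_one_le_two_sqrt_mul (hx : 0 ≤ x) (hy : 0 ≤ y) (h : |√x - √y| ≤ 1) :
    x + y - 1 ≤ 2 * √(x * y) := by
  have : (√x - √y) ^ 2 ≤ 1 := by
    rw [← sq_abs]
    exact pow_le_one₀ (abs_nonneg _) h
  linarith [sqrt_sub_sqrt_sq_s2 hx hy]

end Real

lemma Int.eq_sub_one_or_ceil_eq {x : ℝ} {m : ℤ} (h₁ : m - 1 ≤ x) (h₂ : x ≤ m) :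
    x = ((m - 1 : ℤ) : ℝ) ∨ ⌈x⌉ = m := by
  rcases h₁.eq_or_lt with h | h
  · exact Or.inl (by push_cast; exact h.symm)
  · exact Or.inr (Int.ceil_eq_iff.mpr ⟨h, h₂⟩)

theorem stmt_2_general (n : ℕ)
    (h : ∃ u v : ℕ, 0 < u ∧ 0 < v ∧ n = u * v ∧ |Real.sqrt u - Real.sqrt v| ≤ 1) :
    ∃ t : ℕ, ⌈2 * Real.sqrt n⌉ ^ 2 - 4 * (n : ℤ) = (t : ℤ) ^ 2 := by
  obtain ⟨u, v, -, -, rfl, huv⟩ := h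
  have hu : (0 : ℝ) ≤ u := u.cast_nonneg
  have hv : (0 : ℝ) ≤ v := v.cast_nonneg
  have hlo := Real.add_sub_one_le_two_sqrt_mul hu hv huv
  have hhi := Real.two_sqrt_mul_le_add hu hv
  push_cast
  rcases Int.eq_sub_one_or_ceil_eq (m := u + v) (by push_cast; exact hlo) (by push_cast; exact hhi)
    with hexact | hceil
  · refine ⟨0, ?_⟩
    have hsq : (2 * √(u * v : ℝ)) ^ 2 = 4 * (u * v) := by
      rw [mul_pow, Real.sq_sqrt (mul_nonneg hu hv)]; ring
    rw [hexact] at hsq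
    rw [hexact, Int.ceil_intCast, Nat.cast_zero, zero_pow two_ne_zero, sub_eq_zero]
    exact_mod_cast hsq
  · refine ⟨((u : ℤ) - v).natAbs, ?_⟩
    rw [hceil, Int.natCast_natAbs, sq_abs]
    ring

theorem stmt_2 (n : ℕ) (hn : 0 < n)
    (h : ∃ u v : ℕ, 0 < u ∧ 0 < v ∧ n = u * v ∧ |Real.sqrt u - Real.sqrt v| ≤ 1) :
    ∃ t : ℕ, ⌈2 * Real.sqrt n⌉ ^ 2 - 4 * (n : ℤ) = (t : ℤ) ^ 2 :=
  stmt_2_general n h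
end

section
/- Suppose N = p·q where p and q are primes with |√p - √q| ≤ 1 and p ≠ q. Let t = √(⌈2√N⌉² - 4N). Then t is a positive integer, p and q equal (⌈2√N⌉ + t)/2 and (⌈2√N⌉ - t)/2 (in some order), and these are integers. -/
/-!
Since `(√p - √q)² = p + q - 2√N`, the hypotheses put `p + q - 2√N` in `(0, 1]`, and it cannot
equal `1` because `√N` is irrational (`N` is squarefree and not `1`). Hence `⌈2√N⌉ = p + q`, so
`⌈2√N⌉² - 4N = (p - q)²` and the formulas return `p` and `q`.
-/

theorem Nat.not_isSquare_of_squarefree {n : ℕ} (hsf : Squarefree n) (hn : n ≠ 1) :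
    ¬IsSquare n := by
  rintro ⟨k, rfl⟩
  obtain rfl : k = 1 := Nat.isUnit_iff.1 (hsf k dvd_rfl)
  exact hn rfl

theorem Nat.not_isSquare_mul_of_prime_of_ne {p q : ℕ} (hp : p.Prime) (hq : q.Prime)
    (hne : p ≠ q) : ¬IsSquare (p * q) :=
  Nat.not_isSquare_of_squarefree
    (Nat.squarefree_mul_iff.2 ⟨(Nat.coprime_primes hp hq).2 hne, hp.squarefree, hq.squarefree⟩)
    (fun h => hp.ne_one (Nat.eq_one_of_mul_eq_one_right h))

theorem Real.add_sub_two_sqrt_mul_eq_sq {a b : ℝ} (ha : 0 ≤ a) (hb : 0 ≤ b) :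
    a + b - 2 * √(a * b) = (√a - √b) ^ 2 := by
  rw [Real.sqrt_mul ha, sub_sq, Real.sq_sqrt ha, Real.sq_sqrt hb]
  ring

theorem ceil_two_sqrt_mul_eq_add {a b : ℕ} (hne : a ≠ b) (hsq : ¬IsSquare (a * b))
    (hclose : |√(a : ℝ) - √(b : ℝ)| ≤ 1) :
    ⌈2 * √((a * b : ℕ) : ℝ)⌉ = (a + b : ℤ) := by
  have hgap := Real.add_sub_two_sqrt_mul_eq_sq (Nat.cast_nonneg a) (Nat.cast_nonneg b)
  rw [← Nat.cast_mul] at hgap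
  have hpos : 0 < (a + b : ℝ) - 2 * √((a * b : ℕ) : ℝ) := by
    rw [hgap, sq_pos_iff, sub_ne_zero]
    exact fun h => hne (by exact_mod_cast (Real.sqrt_inj a.cast_nonneg b.cast_nonneg).1 h)
  have hle : (a + b : ℝ) - 2 * √((a * b : ℕ) : ℝ) ≤ 1 := by
    rw [hgap, ← sq_abs]
    exact pow_le_one₀ (abs_nonneg _) hclose
  have hne_one : (a + b : ℝ) - 2 * √((a * b : ℕ) : ℝ) ≠ 1 := fun h =>
    irrational_sqrt_natCast_iff.2 hsq ⟨(a + b - 1 : ℚ) / 2, by push_cast at h ⊢; linarith⟩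
  rw [Int.ceil_eq_iff, Int.cast_add, Int.cast_natCast, Int.cast_natCast]
  constructor <;> linarith [lt_of_le_of_ne hle hne_one]

theorem stmt_5 (p q N : ℕ) (hp : p.Prime) (hq : q.Prime) (hne : p ≠ q)
    (hclose : |Real.sqrt p - Real.sqrt q| ≤ 1) (hN : N = p * q) :
    ∃ t : ℕ, 0 < t ∧
      (t : ℝ) = Real.sqrt ((⌈2 * Real.sqrt N⌉ : ℝ) ^ 2 - 4 * N) ∧
      2 ∣ (⌈2 * Real.sqrt N⌉.toNat + t) ∧
      2 ∣ (⌈2 * Real.sqrt N⌉.toNat - t) ∧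
      ({p, q} : Finset ℕ) =
        {(⌈2 * Real.sqrt N⌉.toNat + t) / 2, (⌈2 * Real.sqrt N⌉.toNat - t) / 2} := by
  wlog hlt : q < p generalizing p q
  · obtain ⟨t, ht⟩ := this q p hq hp hne.symm (by rwa [abs_sub_comm]) (by rw [hN, mul_comm])
      (lt_of_le_of_ne (not_lt.1 hlt) hne)
    exact ⟨t, by rwa [Finset.pair_comm p q]⟩
  subst hN
  have hceil := ceil_two_sqrt_mul_eq_add hne (Nat.not_isSquare_mul_of_prime_of_ne hp hq hne) hclose
  have htoNat : ⌈2 * √((p * q : ℕ) : ℝ)⌉.toNat = p + q := by rw [hceil]; omega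
  refine ⟨p - q, by omega, ?_, by omega, by omega, ?_⟩
  · rw [hceil, Nat.cast_sub hlt.le]
    push_cast
    rw [show ((p + q : ℝ)) ^ 2 - 4 * (p * q) = (p - q) ^ 2 by ring,
      Real.sqrt_sq (sub_nonneg.2 (by exact_mod_cast hlt.le))]
  · rw [htoNat, show (p + q + (p - q)) / 2 = p by omega, show (p + q - (p - q)) / 2 = q by omega]
end

section
/- Let N = p·q with p, q distinct primes, and let d be a positive integer with d < N/2. If N·d = u·v where u, v are positive integers with |√u - √v| ≤ 1 and u, v ≥ 16, then it is not the case that p and q both divide u, and not the case that p and q both divide v. -/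
/-!
If `N = pq` divides `u`, then `Nd = uv` forces `v ≤ d < N/2 ≤ u/2`, so `u > 2v`. For `v ≥ 16`
this makes `√u` exceed `√v + 1`, contradicting `|√u - √v| ≤ 1`; the case `N ∣ v` is symmetric.
-/

lemma Real.one_lt_sqrt_sub_sqrt_of_two_mul_le {a b : ℝ} (hb : 16 ≤ b) (hab : 2 * b ≤ a) :
    1 < √a - √b := by
  have hsb : 4 ≤ √b := by
    rw [show (4 : ℝ) = √16 by rw [show (16 : ℝ) = 4 ^ 2 by norm_num, Real.sqrt_sq (by norm_num)]]
    exact Real.sqrt_le_sqrt hb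
  have hsq : √b ^ 2 = b := Real.sq_sqrt (by linarith)
  have hlt : (√b + 1) ^ 2 < a := by nlinarith
  linarith [(Real.lt_sqrt (by positivity)).mpr hlt]

lemma Nat.two_mul_lt_of_dvd_of_mul_eq_mul {N d u v : ℕ} (hNu : N ∣ u) (hu : 0 < u)
    (h : N * d = u * v) (hdN : 2 * d < N) : 2 * v < u := by
  obtain ⟨k, rfl⟩ := hNu
  have hk : 0 < k := Nat.pos_of_mul_pos_left hu
  have hd : d = k * v := Nat.eq_of_mul_eq_mul_left (n := N) (by omega) (by rw [h, mul_assoc])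
  have hvd : v ≤ d := hd ▸ Nat.le_mul_of_pos_left v hk
  have hNk : N ≤ N * k := Nat.le_mul_of_pos_right N hk
  omega

lemma Nat.not_dvd_of_mul_eq_mul_of_abs_sqrt_sub_sqrt_le_one {N d u v : ℕ} (h : N * d = u * v)
    (hdN : 2 * d < N) (hclose : |√(u : ℝ) - √(v : ℝ)| ≤ 1) (hu : 0 < u) (hv : 16 ≤ v) :
    ¬N ∣ u := fun hNu => by
  have h2vu : 2 * v < u := two_mul_lt_of_dvd_of_mul_eq_mul hNu hu h hdN
  have hgap := Real.one_lt_sqrt_sub_sqrt_of_two_mul_le (a := u) (b := v)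
    (by exact_mod_cast hv) (by exact_mod_cast h2vu.le)
  linarith [(abs_le.mp hclose).2]

theorem stmt_7_general (p q N d u v : ℕ) (hp : p.Prime) (hq : q.Prime) (hne : p ≠ q)
    (hN : N = p * q) (hdN : 2 * d < N)
    (huv : N * d = u * v)
    (hclose : |Real.sqrt u - Real.sqrt v| ≤ 1)
    (h16u : 16 ≤ u) (h16v : 16 ≤ v) :
    ¬(p ∣ u ∧ q ∣ u) ∧ ¬(p ∣ v ∧ q ∣ v) := by
  have hpq : Nat.Coprime p q := (Nat.coprime_primes hp hq).mpr hne
  constructor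
  · rintro ⟨hpu, hqu⟩
    exact Nat.not_dvd_of_mul_eq_mul_of_abs_sqrt_sub_sqrt_le_one huv hdN hclose (by omega) h16v
      (hN ▸ hpq.mul_dvd_of_dvd_of_dvd hpu hqu)
  · rintro ⟨hpv, hqv⟩
    exact Nat.not_dvd_of_mul_eq_mul_of_abs_sqrt_sub_sqrt_le_one (huv.trans (mul_comm u v)) hdN
      (abs_sub_comm (√(u : ℝ)) _ ▸ hclose) (by omega) h16u (hN ▸ hpq.mul_dvd_of_dvd_of_dvd hpv hqv)

theorem stmt_7 (p q N d u v : ℕ) (hp : p.Prime) (hq : q.Prime) (hne : p ≠ q)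
    (hN : N = p * q) (hd : 0 < d) (hdN : 2 * d < N)
    (hu : 0 < u) (hv : 0 < v) (huv : N * d = u * v)
    (hclose : |Real.sqrt u - Real.sqrt v| ≤ 1)
    (h16u : 16 ≤ u) (h16v : 16 ≤ v) :
    ¬(p ∣ u ∧ q ∣ u) ∧ ¬(p ∣ v ∧ q ∣ v) :=
  stmt_7_general p q N d u v hp hq hne hN hdN huv hclose h16u h16v
end
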